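/- Let M ≥ 2, α_k = M^{-k}, β_k = M^{2k}, and φ(z) = log|z₁| + Σ_{k=1}^∞ α_k log(|z₁| + |z₂/k|^{β_k}) on ℂ². Then for every z₂ ≠ 0, the Lelong number of φ at the point (0, z₂) equals 1. -/

import Mathlib

open MeasureTheory Filter Metric Complex Set Topology

noncomputable section

/-- `e2 x` represents `e^{-2x}` for extended-real `x` (value `0` at `x = ⊥`,
where the correct value `+∞` cannot be represented in `ℝ`; in all statements the
`⊥`-locus is negligible or handled separately). -/
def e2 (x : EReal) : ℝ := if x = ⊥ then 0 else Real.exp (-2 * x.toReal)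

/-- Subharmonicity of `u : ℂ → EReal` on `U`: upper semicontinuity together with
the sub-mean-value inequality over all sufficiently small circles. -/
def SubharmonicOn' (u : ℂ → EReal) (U : Set ℂ) : Prop :=
  UpperSemicontinuousOn u U ∧
    ∀ z ∈ U, ∀ᶠ (r : ℝ) in 𝓝[>] (0 : ℝ),
      u z ≤ (((2 * Real.pi)⁻¹ *
        ∫ θ in (0:ℝ)..(2 * Real.pi),
          (u (z + (r : ℂ) * Complex.exp ((θ : ℂ) * Complex.I))).toReal : ℝ) : EReal)

/-- `u` is subharmonic on some open neighborhood of `z₀`. -/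
def SubharmonicNear (u : ℂ → EReal) (z₀ : ℂ) : Prop :=
  ∃ U : Set ℂ, IsOpen U ∧ z₀ ∈ U ∧ SubharmonicOn' u U

/-- The Lelong number of `u` at `z₀` equals `γ`:
`(sup_{|z-z₀|=r} u)/log r → γ` as `r → 0⁺`. -/
def HasLelongAt (u : ℂ → EReal) (z₀ : ℂ) (γ : ℝ) : Prop :=
  Tendsto (fun r : ℝ => (⨆ z ∈ sphere z₀ r, u z).toReal / Real.log r)
    (𝓝[>] (0:ℝ)) (𝓝 γ)

/-- `f` is integrable on some ball around `z₀` (local integrability near `z₀`). -/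
def LocInt (f : ℂ → ℝ) (z₀ : ℂ) : Prop :=
  ∃ r > 0, IntegrableOn f (ball z₀ r) volume

/-- Plurisubharmonicity of `u : ℂ × ℂ → EReal` on `U`: upper semicontinuity
together with subharmonicity of the restriction to every complex line. -/
def PSHOn (u : ℂ × ℂ → EReal) (U : Set (ℂ × ℂ)) : Prop :=
  UpperSemicontinuousOn u U ∧
    ∀ a b : ℂ × ℂ, SubharmonicOn' (fun t : ℂ => u (a + t • b)) {t : ℂ | a + t • b ∈ U}

/-- The (two dimensional) Lelong number of `u` at `x` equals `γ`:
`(sup_{|z-x|≤r} u)/log r → γ` as `r → 0⁺`. -/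
def HasLelongAt2 (u : ℂ × ℂ → EReal) (x : ℂ × ℂ) (γ : ℝ) : Prop :=
  Tendsto (fun r : ℝ => (⨆ z ∈ closedBall x r, u z).toReal / Real.log r)
    (𝓝[>] (0:ℝ)) (𝓝 γ)

/-- `f` is integrable on some ball around `x` in `ℂ²`. -/
def LocInt2 (f : ℂ × ℂ → ℝ) (x : ℂ × ℂ) : Prop :=
  ∃ r > 0, IntegrableOn f (ball x r) volume

/-- The k-th term (k ≥ 1) of the Guan–Li series:
`α_k · log(|z₁| + |z₂/k|^{β_k})` with `α_k = M^{-k}`, `β_k = M^{2k}`. -/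
def phiTerm (M : ℝ) (k : ℕ) (z : ℂ × ℂ) : ℝ :=
  M ^ (-(k : ℤ)) * Real.log (‖z.1‖ +
    (‖z.2‖ / (k : ℝ)) ^ (M ^ (2 * k) : ℝ))

/-- The plurisubharmonic weight
`φ(z) = log|z₁| + ∑_{k≥1} M^{-k} log(|z₁| + |z₂/k|^{M^{2k}})`,
with value `⊥ = -∞` on `{z₁ = 0}` (where the series diverges to `-∞`). -/
def phi (M : ℝ) (z : ℂ × ℂ) : EReal :=
  if z.1 = 0 then ⊥ else
    ((Real.log ‖z.1‖ + ∑' k : ℕ, phiTerm M (k + 1) z : ℝ) : EReal)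

/-! On the closed ball of radius `r ≤ 1` around `(0, z₂)` the series part of `φ` is
bounded above by its value at `(1, |z₂| + 1)`, so `sup φ ≤ log r + C`. At the point `(r, z₂)` the
first `K` terms are at least their (finite) values at `(0, z₂)`, because `z₂ ≠ 0`, while every
later term is at least `M^{-k} log r`; hence `sup φ ≥ (1 + ε_K) log r + D_K` with
`ε_K = ∑_{k > K} M^{-k} → 0`. Dividing by `log r < 0` squeezes the quotient to `1`. -/

open Finset

theorem EReal.toReal_mem_Icc {x : EReal} {a b : ℝ} (ha : (a : EReal) ≤ x) (hb : x ≤ b) :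
    x.toReal ∈ Set.Icc a b := by
  lift x to ℝ using ⟨ne_top_of_le_ne_top (EReal.coe_ne_top b) hb,
    ne_bot_of_le_ne_bot (EReal.coe_ne_bot a) ha⟩
  exact ⟨by exact_mod_cast ha, by exact_mod_cast hb⟩

theorem tendsto_div_log_of_bounds {f : ℝ → ℝ} {γ C : ℝ} {ε D : ℕ → ℝ}
    (hε : Tendsto ε atTop (𝓝 0))
    (hupper : ∀ᶠ r in 𝓝[>] 0, f r ≤ γ * Real.log r + C)
    (hlower : ∀ K, ∀ᶠ r in 𝓝[>] 0, (γ + ε K) * Real.log r + D K ≤ f r) :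
    Tendsto (fun r => f r / Real.log r) (𝓝[>] 0) (𝓝 γ) := by
  have hlog := Real.tendsto_log_nhdsGT_zero
  have hneg : ∀ᶠ r in 𝓝[>] (0 : ℝ), Real.log r < 0 := hlog.eventually (eventually_lt_atBot 0)
  refine tendsto_order.2 ⟨fun a ha => ?_, fun b hb => ?_⟩
  · have hlim : Tendsto (fun r => γ + C / Real.log r) (𝓝[>] 0) (𝓝 γ) := by
      simpa using tendsto_const_nhds.add (tendsto_const_nhds.div_atBot hlog)
    filter_upwards [hlim.eventually (eventually_gt_nhds ha), hupper, hneg] with r hr hf hL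
    calc a < γ + C / Real.log r := hr
      _ ≤ f r / Real.log r := by
        rwa [le_div_iff_of_neg hL, add_mul, div_mul_cancel₀ _ hL.ne]
  · obtain ⟨K, hK⟩ := (hε.eventually (eventually_lt_nhds (sub_pos.2 hb))).exists
    have hlim : Tendsto (fun r => γ + ε K + D K / Real.log r) (𝓝[>] 0) (𝓝 (γ + ε K)) := by
      simpa using tendsto_const_nhds.add (tendsto_const_nhds.div_atBot hlog)
    filter_upwards [hlim.eventually (eventually_lt_nhds (by linarith : γ + ε K < b)), hlower K, hneg]
      with r hr hf hL
    calc f r / Real.log r ≤ γ + ε K + D K / Real.log r := by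
          rwa [div_le_iff_of_neg hL, add_mul, div_mul_cancel₀ _ hL.ne]
      _ < b := hr

section phiTerm

variable {M : ℝ}

theorem phiTerm_eq (k : ℕ) (z : ℂ × ℂ) :
    phiTerm M k z = M⁻¹ ^ k * Real.log (‖z.1‖ + (‖z.2‖ / k) ^ (M ^ (2 * k) : ℝ)) := by
  rw [phiTerm, zpow_neg, zpow_natCast, inv_pow]

theorem phiTerm_le_phiTerm (hM : 0 ≤ M) {k : ℕ} {z w : ℂ × ℂ}
    (hz : 0 < ‖z.1‖ + (‖z.2‖ / k) ^ (M ^ (2 * k) : ℝ))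
    (h₁ : ‖z.1‖ ≤ ‖w.1‖) (h₂ : ‖z.2‖ ≤ ‖w.2‖) : phiTerm M k z ≤ phiTerm M k w := by
  rw [phiTerm_eq, phiTerm_eq]
  gcongr

theorem pow_mul_log_norm_fst_le_phiTerm (hM : 0 ≤ M) {z : ℂ × ℂ} (hz : z.1 ≠ 0) (k : ℕ) :
    M⁻¹ ^ k * Real.log ‖z.1‖ ≤ phiTerm M k z := by
  rw [phiTerm_eq]
  gcongr
  exact le_add_of_nonneg_right (by positivity)

theorem summable_phiTerm (hM : 1 < M) {z : ℂ × ℂ} (hz : z.1 ≠ 0) :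
    Summable fun k => phiTerm M k z := by
  have hx : 0 < ‖z.1‖ := norm_pos_iff.2 hz
  refine Summable.of_norm_bounded_eventually
    ((summable_geometric_of_lt_one (by positivity) (inv_lt_one_of_one_lt₀ hM)).mul_right
      (max |Real.log ‖z.1‖| |Real.log (‖z.1‖ + 1)|)) ?_
  rw [Nat.cofinite_eq_atTop]
  filter_upwards [eventually_ge_atTop ⌈‖z.2‖⌉₊] with k hk
  have ht₀ : 0 ≤ (‖z.2‖ / k) ^ (M ^ (2 * k) : ℝ) := by positivity
  have ht₁ : (‖z.2‖ / k) ^ (M ^ (2 * k) : ℝ) ≤ 1 :=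
    Real.rpow_le_one (by positivity) (div_le_one_of_le₀ (Nat.ceil_le.1 hk) (by positivity))
      (by positivity)
  rw [phiTerm_eq, norm_mul, norm_pow, norm_inv, Real.norm_of_nonneg (by linarith),
    Real.norm_eq_abs]
  gcongr
  exact abs_le_max_abs_abs (Real.log_le_log hx (by linarith))
    (Real.log_le_log (by positivity) (by linarith))

theorem summable_phiTerm_succ (hM : 1 < M) {z : ℂ × ℂ} (hz : z.1 ≠ 0) :
    Summable fun k => phiTerm M (k + 1) z :=
  (summable_nat_add_iff 1).2 (summable_phiTerm hM hz)

theorem tsum_phiTerm_le (hM : 1 < M) {z : ℂ × ℂ} {A : ℝ} (hz : z.1 ≠ 0) (h₁ : ‖z.1‖ ≤ 1)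
    (h₂ : ‖z.2‖ ≤ A) :
    ∑' k, phiTerm M (k + 1) z ≤ ∑' k, phiTerm M (k + 1) (1, (A : ℂ)) :=
  (summable_phiTerm_succ hM hz).tsum_le_tsum
    (fun _ => phiTerm_le_phiTerm (by linarith)
      (add_pos_of_pos_of_nonneg (norm_pos_iff.2 hz) (by positivity))
      (by simpa using h₁) (by simpa using h₂.trans (le_abs_self A)))
    (summable_phiTerm_succ hM one_ne_zero)

theorem sum_phiTerm_add_mul_log_le_tsum_phiTerm (hM : 1 < M) {z : ℂ × ℂ} (hz₁ : z.1 ≠ 0)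
    (hz₂ : z.2 ≠ 0) (K : ℕ) :
    ∑ k ∈ range K, phiTerm M (k + 1) (0, z.2) + M⁻¹ ^ (K + 1) * (1 - M⁻¹)⁻¹ * Real.log ‖z.1‖
      ≤ ∑' k, phiTerm M (k + 1) z := by
  have hsum := summable_phiTerm_succ hM hz₁
  have hhead : ∑ k ∈ range K, phiTerm M (k + 1) (0, z.2) ≤ ∑ k ∈ range K, phiTerm M (k + 1) z :=
    sum_le_sum fun k _ => phiTerm_le_phiTerm (by linarith)
      (by simpa using Real.rpow_pos_of_pos (div_pos (norm_pos_iff.2 hz₂) (by positivity)) _)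
      (by simp) le_rfl
  have hgeom : HasSum (fun k => M⁻¹ ^ (K + 1) * M⁻¹ ^ k * Real.log ‖z.1‖)
      (M⁻¹ ^ (K + 1) * (1 - M⁻¹)⁻¹ * Real.log ‖z.1‖) :=
    ((hasSum_geometric_of_lt_one (by positivity) (inv_lt_one_of_one_lt₀ hM)).mul_left _).mul_right _
  have htail (k : ℕ) : M⁻¹ ^ (K + 1) * M⁻¹ ^ k * Real.log ‖z.1‖ ≤ phiTerm M (k + K + 1) z := by
    rw [← pow_add, add_comm, ← add_assoc]
    exact pow_mul_log_norm_fst_le_phiTerm (by linarith) hz₁ _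
  rw [← hsum.sum_add_tsum_nat_add K]
  exact add_le_add hhead (hasSum_le htail hgeom ((summable_nat_add_iff K).2 hsum).hasSum)

end phiTerm

section lelong

variable {M : ℝ} {z₂ : ℂ} {r : ℝ}

theorem iSup_phi_closedBall_le (hM : 1 < M) (hr : r ≤ 1) :
    ⨆ z ∈ closedBall ((0 : ℂ), z₂) r, phi M z
      ≤ ((Real.log r + ∑' k, phiTerm M (k + 1) (1, ((‖z₂‖ + 1 : ℝ) : ℂ)) : ℝ) : EReal) := by
  refine iSup₂_le fun z hz => ?_
  rw [← closedBall_prod_same, Set.mem_prod, mem_closedBall_zero_iff] at hz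
  rw [phi]
  split_ifs with hz₁
  · exact bot_le
  · have hz₂ : ‖z.2‖ ≤ ‖z₂‖ + 1 := (norm_le_of_mem_closedBall hz.2).trans (by linarith)
    exact EReal.coe_le_coe_iff.2 (add_le_add (Real.log_le_log (norm_pos_iff.2 hz₁) hz.1)
      (tsum_phiTerm_le hM hz₁ (hz.1.trans hr) hz₂))

theorem le_iSup_phi_closedBall (hM : 1 < M) (hz₂ : z₂ ≠ 0) (hr : 0 < r) (K : ℕ) :
    (((1 + M⁻¹ ^ (K + 1) * (1 - M⁻¹)⁻¹) * Real.log r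
        + ∑ k ∈ range K, phiTerm M (k + 1) (0, z₂) : ℝ) : EReal)
      ≤ ⨆ z ∈ closedBall ((0 : ℂ), z₂) r, phi M z := by
  have hp₁ : (r : ℂ) ≠ 0 := ofReal_ne_zero.2 hr.ne'
  have hp : ((r : ℂ), z₂) ∈ closedBall ((0 : ℂ), z₂) r := by
    rw [← closedBall_prod_same]
    exact ⟨by simp [abs_of_pos hr], mem_closedBall_self hr.le⟩
  have hnorm : ‖(r : ℂ)‖ = r := by simp [abs_of_pos hr]
  have hsum := sum_phiTerm_add_mul_log_le_tsum_phiTerm hM (z := ((r : ℂ), z₂)) hp₁ hz₂ K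
  refine le_trans ?_ (le_biSup (phi M) hp)
  rw [phi, if_neg hp₁, EReal.coe_le_coe_iff]
  rw [hnorm] at hsum ⊢
  linarith

end lelong

/-- For `M ≥ 2` and
`φ(z) = log|z₁| + ∑_{k≥1} M^{-k} log(|z₁| + |z₂/k|^{M^{2k}})`, the Lelong number
of `φ` at every point `(0, z₂)` with `z₂ ≠ 0` equals `1`. -/
theorem stmt6 (M : ℝ) (hM : 2 ≤ M) :
    ∀ z₂ : ℂ, z₂ ≠ 0 → HasLelongAt2 (phi M) (0, z₂) 1 := by
  intro z₂ hz₂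
  have hM₁ : 1 < M := by linarith
  have hr₁ : ∀ᶠ r in 𝓝[>] (0 : ℝ), r ≤ 1 :=
    eventually_nhdsWithin_of_eventually_nhds (eventually_le_nhds one_pos)
  refine tendsto_div_log_of_bounds (C := ∑' k, phiTerm M (k + 1) (1, ((‖z₂‖ + 1 : ℝ) : ℂ)))
    (ε := fun K => M⁻¹ ^ (K + 1) * (1 - M⁻¹)⁻¹)
    (D := fun K => ∑ k ∈ range K, phiTerm M (k + 1) (0, z₂)) ?_ ?_ fun K => ?_
  · simpa using ((tendsto_pow_atTop_nhds_zero_of_lt_one (by positivity)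
      (inv_lt_one_of_one_lt₀ hM₁)).comp (tendsto_add_atTop_nat 1)).mul_const ((1 - M⁻¹)⁻¹)
  · filter_upwards [self_mem_nhdsWithin, hr₁] with r hr₀ hr₁
    rw [one_mul]
    exact (EReal.toReal_mem_Icc (le_iSup_phi_closedBall hM₁ hz₂ hr₀ 0)
      (iSup_phi_closedBall_le hM₁ hr₁)).2
  · filter_upwards [self_mem_nhdsWithin, hr₁] with r hr₀ hr₁
    exact (EReal.toReal_mem_Icc (le_iSup_phi_closedBall hM₁ hz₂ hr₀ K)
      (iSup_phi_closedBall_le hM₁ hr₁)).1
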